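/- Let 𝔅_1 be a collection of admissible n-subsets of [n] ∪ [n]* satisfying the Strong Exchange Property, fix i ∈ [n], and let 𝔅_2 = {(i,i*)·B : B ∈ 𝔅_1} (applying the transposition swapping i and i* elementwise). Then the exploded sum 𝔅_3 = {B ∪ {n+1} : B ∈ 𝔅_1} ∪ {B ∪ {(n+1)*} : B ∈ 𝔅_2} satisfies the Strong Exchange Property on [n+1] ∪ [n+1]*. -/

import Mathlib

/-!
An admissible `n`-subset of `[n] ∪ [n]*` contains exactly one of `j, j*` for every `j`, so on
`𝔅₁` the transposition `(i, i*)` acts as `B ↦ B ∆ {i, i*}`. Flipping both `i` and `n+1` is an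
involution commuting with `*` that exchanges the two halves of the exploded sum, so it suffices
to exchange from `A = B_A ∪ {n+1}`. If `C = B_C ∪ {n+1}`, an exchange of `𝔅₁` lifts. If
`C = (i, i*)·B_C ∪ {(n+1)*}`, an exchange of `𝔅₁` between `B_A` and `B_C` either avoids the index
`i` and lifts, or involves `{i, i*}`, which is then traded for `{n+1, (n+1)*}`. For `a = n+1`
or `(n+1)*`, exchange in `𝔅₁` at the element of `B_C ∖ B_A` of index `i`, if there is one: the
partner found avoids the index `i` because a family with the Strong Exchange Property never
contains both `B` and `B ∆ {x, x*}` when `x ∈ B`, `x* ∉ B`.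
-/

/-- `J n` models `[n] ∪ [n]*` : the element `(i, false)` is `i` and `(i, true)` is `i*`. -/
abbrev J (n : ℕ) := Fin n × Bool

/-- The star involution `i ↦ i*`, `i* ↦ i`. -/
def jstar {n : ℕ} (x : J n) : J n := (x.1, !x.2)

/-- `K* = { k* : k ∈ K }`. -/
def starSet {n : ℕ} (K : Finset (J n)) : Finset (J n) := K.image jstar

/-- A subset `K ⊆ [n] ∪ [n]*` is admissible if `K ∩ K* = ∅`. -/
def Admissible {n : ℕ} (K : Finset (J n)) : Prop := K ∩ starSet K = ∅

/-- The Strong Exchange Property for a collection of subsets of `[n] ∪ [n]*`. -/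
def StrongExchange {n : ℕ} (𝔅 : Set (Finset (J n))) : Prop :=
  ∀ A ∈ 𝔅, ∀ C ∈ 𝔅, ∀ a ∈ symmDiff A C, ∃ b ∈ C \ A, b ≠ jstar a ∧
    symmDiff A {a, b, jstar a, jstar b} ∈ 𝔅 ∧ symmDiff C {a, b, jstar a, jstar b} ∈ 𝔅

/-- Inclusion of `[n] ∪ [n]*` into `[n+1] ∪ [n+1]*`. -/
def jlift {n : ℕ} (x : J n) : J (n + 1) := (x.1.castSucc, x.2)

/-- The exploded sum `𝔅₃` of two collections of admissible `n`-subsets of `[n] ∪ [n]*`: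
`{B ∪ {n+1} : B ∈ 𝔅₁} ∪ {B ∪ {(n+1)*} : B ∈ 𝔅₂}`. -/
def explodedSum {n : ℕ} (𝔅₁ 𝔅₂ : Set (Finset (J n))) : Set (Finset (J (n + 1))) :=
  {C | ∃ B ∈ 𝔅₁, C = insert (Fin.last n, false) (B.image jlift)} ∪
  {C | ∃ B ∈ 𝔅₂, C = insert (Fin.last n, true) (B.image jlift)}

open scoped symmDiff

section Star
variable {n : ℕ}

@[simp] lemma jstar_jstar (x : J n) : jstar (jstar x) = x := by simp [jstar]

@[simp] lemma jstar_fst (x : J n) : (jstar x).1 = x.1 := rfl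

lemma eq_or_eq_jstar_of_fst_eq {x y : J n} (h : x.1 = y.1) : x = y ∨ x = jstar y := by
  obtain ⟨x₁, x₂⟩ := x
  obtain ⟨y₁, y₂⟩ := y
  cases x₂ <;> cases y₂ <;> simp_all [jstar]

def jpair (x : J n) : Finset (J n) := {x, jstar x}

@[simp] lemma mem_jpair {x y : J n} : y ∈ jpair x ↔ y = x ∨ y = jstar x := by simp [jpair]

lemma fst_eq_of_mem_jpair {x y : J n} (h : y ∈ jpair x) : y.1 = x.1 := by
  rcases mem_jpair.1 h with rfl | rfl <;> rfl

lemma jpair_eq_of_fst_eq {x y : J n} (h : x.1 = y.1) : jpair x = jpair y := by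
  rcases eq_or_eq_jstar_of_fst_eq h with rfl | rfl
  · rfl
  · simp [jpair, Finset.pair_comm]

lemma insert_jstar_eq_jpair_union (a b : J n) :
    ({a, b, jstar a, jstar b} : Finset (J n)) = jpair a ∪ jpair b := by
  ext
  simp only [Finset.mem_insert, Finset.mem_singleton, Finset.mem_union, mem_jpair]
  tauto

lemma jpair_union_jpair_of_fst_ne {x y : J n} (h : x.1 ≠ y.1) :
    jpair x ∪ jpair y = jpair x ∆ jpair y :=
  (Disjoint.symmDiff_eq_sup <| Finset.disjoint_left.2 fun _ hx hy =>
    h ((fst_eq_of_mem_jpair hx).symm.trans (fst_eq_of_mem_jpair hy))).symm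

lemma Admissible.jstar_notMem {B : Finset (J n)} (hB : Admissible B) {x : J n} (hx : x ∈ B) :
    jstar x ∉ B := fun h => by
  have : jstar x ∈ B ∩ starSet B := Finset.mem_inter.2 ⟨h, Finset.mem_image_of_mem _ hx⟩
  simp [show B ∩ starSet B = ∅ from hB] at this

lemma Admissible.exists_mem_fst_eq {B : Finset (J n)} (hB : Admissible B) (hcard : B.card = n)
    (j : Fin n) : ∃ x ∈ B, x.1 = j := by
  suffices j ∈ B.image Prod.fst by simpa using this
  have hinj : Set.InjOn Prod.fst (B : Set (J n)) := fun x hx y hy h => by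
    rcases eq_or_eq_jstar_of_fst_eq h with h | rfl
    · exact h
    · exact absurd hx (hB.jstar_notMem hy)
  have huniv : B.image Prod.fst = Finset.univ := Finset.eq_univ_of_card _ <| by
    rw [Finset.card_image_of_injOn hinj, hcard, Fintype.card_fin]
  exact huniv ▸ Finset.mem_univ j

end Star

section Exchange
variable {n : ℕ}

def ExchangeAt (𝔅 : Set (Finset (J n))) (A C : Finset (J n)) (a : J n) : Prop :=
  ∃ b ∈ C \ A, b ≠ jstar a ∧
    A ∆ {a, b, jstar a, jstar b} ∈ 𝔅 ∧ C ∆ {a, b, jstar a, jstar b} ∈ 𝔅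

/-- Exchanging at `x` across `A` and `A ∆ {x, x*}` would need a `b ∈ {x*}` with `b ≠ x*`. -/
lemma StrongExchange.symmDiff_jpair_notMem {𝔅 : Set (Finset (J n))} (h : StrongExchange 𝔅)
    {A : Finset (J n)} (hA : A ∈ 𝔅) {x : J n} (hx : x ∈ A) (hx' : jstar x ∉ A) :
    A ∆ jpair x ∉ 𝔅 := fun hC => by
  obtain ⟨b, hb, hbx, -⟩ := h A hA _ hC x (by simp [symmDiff_symmDiff_cancel_left])
  have hb' : b ∈ A ∆ (A ∆ jpair x) := Finset.mem_symmDiff.2 (Or.inr (Finset.mem_sdiff.1 hb))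
  rw [symmDiff_symmDiff_cancel_left, mem_jpair] at hb'
  rcases hb' with rfl | rfl
  exacts [(Finset.mem_sdiff.1 hb).2 hx, hbx rfl]

lemma ExchangeAt.image {m : ℕ} {F : Set (Finset (J m))} {A C : Finset (J m)} {a : J m}
    {f : J m → J m} (h : ExchangeAt F A C a) (hf : Function.Involutive f)
    (hstar : ∀ x, f (jstar x) = jstar (f x)) (hF : ∀ X ∈ F, X.image f ∈ F) :
    ExchangeAt F (A.image f) (C.image f) (f a) := by
  obtain ⟨b, hb, hba, hA, hC⟩ := h
  have himage (X : Finset (J m)) : X.image f ∆ {f a, f b, jstar (f a), jstar (f b)} =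
      (X ∆ {a, b, jstar a, jstar b}).image f := by
    simp [Finset.image_symmDiff _ _ hf.injective, Finset.image_insert, hstar]
  refine ⟨f b, ?_, fun h => hba (hf.injective (h.trans (hstar a).symm)), ?_, ?_⟩
  · rw [← Finset.image_sdiff _ _ hf.injective]
    exact Finset.mem_image_of_mem f hb
  · exact himage A ▸ hF _ hA
  · exact himage C ▸ hF _ hC

end Exchange

section Flip
variable {n : ℕ}

def flipAt (S : Finset (Fin n)) (x : J n) : J n := if x.1 ∈ S then jstar x else x

lemma flipAt_involutive (S : Finset (Fin n)) : Function.Involutive (flipAt S) := by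
  intro x
  unfold flipAt
  split_ifs <;> simp_all

lemma flipAt_jstar (S : Finset (Fin n)) (x : J n) : flipAt S (jstar x) = jstar (flipAt S x) := by
  unfold flipAt
  split_ifs <;> simp_all

lemma image_image_flipAt (S : Finset (Fin n)) (X : Finset (J n)) :
    (X.image (flipAt S)).image (flipAt S) = X := by
  rw [Finset.image_image, (flipAt_involutive S).comp_self, Finset.image_id]

lemma coe_swap_eq_flipAt (i : Fin n) :
    ⇑(Equiv.swap ((i, false) : J n) (i, true)) = flipAt {i} := by
  funext ⟨j, β⟩
  by_cases h : j = i
  · subst h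
    cases β <;> simp [flipAt, jstar]
  · rw [Equiv.swap_apply_of_ne_of_ne] <;> simp [flipAt, h]

lemma mem_image_flipAt {S : Finset (Fin n)} {X : Finset (J n)} {y : J n} :
    y ∈ X.image (flipAt S) ↔ flipAt S y ∈ X := by
  conv_lhs => rw [← flipAt_involutive S y]
  exact (flipAt_involutive S).injective.mem_finset_image

lemma image_flipAt_eq_symmDiff {B : Finset (J n)} {d : J n} (hd : d ∈ B) (hd' : jstar d ∉ B) :
    B.image (flipAt {d.1}) = B ∆ jpair d := by
  ext y
  rw [mem_image_flipAt, Finset.mem_symmDiff]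
  by_cases hy : y.1 = d.1
  · rcases eq_or_eq_jstar_of_fst_eq hy with rfl | rfl <;> simp [flipAt, hd, hd']
  · have : y ∉ jpair d := fun h => hy (fst_eq_of_mem_jpair h)
    simp [flipAt, hy, this]

end Flip

section Explode
variable {n : ℕ}

lemma jlift_injective : Function.Injective (jlift (n := n)) := fun x y h => by
  simpa [jlift, Prod.ext_iff] using h

@[simp] lemma jlift_inj {x y : J n} : jlift x = jlift y ↔ x = y := jlift_injective.eq_iff

@[simp] lemma jlift_ne_last (x : J n) (β : Bool) : jlift x ≠ (Fin.last n, β) := by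
  simp [jlift, Prod.ext_iff, (Fin.castSucc_lt_last x.1).ne]

@[simp] lemma last_ne_jlift (x : J n) (β : Bool) : (Fin.last n, β) ≠ jlift x :=
  (jlift_ne_last x β).symm

@[simp] lemma jstar_jlift (x : J n) : jstar (jlift x) = jlift (jstar x) := rfl

@[simp] lemma jstar_last (β : Bool) :
    jstar ((Fin.last n, β) : J (n + 1)) = (Fin.last n, !β) := rfl

lemma exists_eq_jlift_or_eq_last (a : J (n + 1)) :
    (∃ x, a = jlift x) ∨ ∃ β, a = (Fin.last n, β) := by
  obtain ⟨k, β⟩ := a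
  induction k using Fin.lastCases with
  | last => exact Or.inr ⟨β, rfl⟩
  | cast k => exact Or.inl ⟨(k, β), rfl⟩

lemma jpair_jlift (x : J n) : jpair (jlift x) = (jpair x).image jlift := by
  simp [jpair, Finset.image_insert]

/-- `B ∪ {n+1}` for `β = false` and `B ∪ {(n+1)*}` for `β = true`. -/
def explode (β : Bool) (B : Finset (J n)) : Finset (J (n + 1)) :=
  insert (Fin.last n, β) (B.image jlift)

@[simp] lemma jlift_mem_explode {β : Bool} {B : Finset (J n)} {x : J n} :
    jlift x ∈ explode β B ↔ x ∈ B := by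
  simp [explode]

@[simp] lemma last_mem_explode {β γ : Bool} {B : Finset (J n)} :
    ((Fin.last n, γ) : J (n + 1)) ∈ explode β B ↔ γ = β := by
  simp [explode]

lemma explode_symmDiff_image_jlift (β : Bool) (B S : Finset (J n)) :
    explode β B ∆ S.image jlift = explode β (B ∆ S) := by
  ext a
  rcases exists_eq_jlift_or_eq_last a with ⟨x, rfl⟩ | ⟨γ, rfl⟩ <;> simp [Finset.mem_symmDiff]

lemma explode_symmDiff_jpair_last_union (β γ : Bool) (B S : Finset (J n)) :
    explode β B ∆ (jpair (Fin.last n, γ) ∪ S.image jlift) = explode (!β) (B ∆ S) := by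
  ext a
  rcases exists_eq_jlift_or_eq_last a with ⟨x, rfl⟩ | ⟨δ, rfl⟩
  · simp [Finset.mem_symmDiff]
  · cases β <;> cases γ <;> cases δ <;> simp [Finset.mem_symmDiff]

lemma mem_explode_symmDiff_explode {β : Bool} {B D : Finset (J n)} {a : J (n + 1)}
    (ha : a ∈ explode β B ∆ explode β D) : ∃ x ∈ B ∆ D, a = jlift x := by
  rcases exists_eq_jlift_or_eq_last a with ⟨x, rfl⟩ | ⟨γ, rfl⟩
  · exact ⟨x, by simpa [Finset.mem_symmDiff] using ha, rfl⟩
  · simp [Finset.mem_symmDiff] at ha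

lemma insert_jstar_jlift (x y : J n) :
    ({jlift x, jlift y, jstar (jlift x), jstar (jlift y)} : Finset (J (n + 1))) =
      ({x, y, jstar x, jstar y} : Finset (J n)).image jlift := by
  simp [Finset.image_insert]

lemma ExchangeAt.explode {𝔅 : Set (Finset (J n))} {F : Set (Finset (J (n + 1)))}
    {A C : Finset (J n)} {x : J n} {β : Bool} (h : ExchangeAt 𝔅 A C x)
    (hF : ∀ B ∈ 𝔅, explode β B ∈ F) : ExchangeAt F (explode β A) (explode β C) (jlift x) := by
  obtain ⟨b, hb, hbx, hA, hC⟩ := h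
  refine ⟨jlift b, by simpa using hb, by simpa using hbx, ?_, ?_⟩ <;>
    rw [insert_jstar_jlift, explode_symmDiff_image_jlift]
  exacts [hF _ hA, hF _ hC]

lemma flipAt_castSucc_last_jlift (i : Fin n) (x : J n) :
    flipAt {i.castSucc, Fin.last n} (jlift x) = jlift (flipAt {i} x) := by
  unfold flipAt
  split_ifs <;> simp_all [jlift, jstar, (Fin.castSucc_lt_last x.1).ne]

lemma image_flipAt_explode (i : Fin n) (β : Bool) (B : Finset (J n)) :
    (explode β B).image (flipAt {i.castSucc, Fin.last n}) =
      explode (!β) (B.image (flipAt {i})) := by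
  have hlast : flipAt {i.castSucc, Fin.last n} ((Fin.last n, β) : J (n + 1)) =
      (Fin.last n, !β) := by
    simp [flipAt]
  simp only [explode, Finset.image_insert, Finset.image_image, hlast]
  congr 2
  funext x
  exact flipAt_castSucc_last_jlift i x

end Explode

section TransposedExplodedSum
variable {n : ℕ} {𝔅 : Set (Finset (J n))} {i : Fin n}

def transposedExplodedSum (i : Fin n) (𝔅 : Set (Finset (J n))) : Set (Finset (J (n + 1))) :=
  explodedSum 𝔅 {C | ∃ B ∈ 𝔅, C = B.image (flipAt {i})}

lemma explode_false_mem {B : Finset (J n)} (hB : B ∈ 𝔅) :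
    explode false B ∈ transposedExplodedSum i 𝔅 :=
  Or.inl ⟨B, hB, rfl⟩

lemma explode_true_image_flipAt_mem {B : Finset (J n)} (hB : B ∈ 𝔅) :
    explode true (B.image (flipAt {i})) ∈ transposedExplodedSum i 𝔅 :=
  Or.inr ⟨_, ⟨B, hB, rfl⟩, rfl⟩

lemma mem_transposedExplodedSum {X : Finset (J (n + 1))} :
    X ∈ transposedExplodedSum i 𝔅 ↔
      ∃ B ∈ 𝔅, X = explode false B ∨ X = explode true (B.image (flipAt {i})) := by
  constructor
  · rintro (⟨B, hB, rfl⟩ | ⟨_, ⟨B, hB, rfl⟩, rfl⟩)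
    exacts [⟨B, hB, Or.inl rfl⟩, ⟨B, hB, Or.inr rfl⟩]
  · rintro ⟨B, hB, rfl | rfl⟩
    exacts [explode_false_mem hB, explode_true_image_flipAt_mem hB]

lemma image_flipAt_mem {X : Finset (J (n + 1))} (hX : X ∈ transposedExplodedSum i 𝔅) :
    X.image (flipAt {i.castSucc, Fin.last n}) ∈ transposedExplodedSum i 𝔅 := by
  obtain ⟨B, hB, rfl | rfl⟩ := mem_transposedExplodedSum.1 hX
  · rw [image_flipAt_explode]
    exact explode_true_image_flipAt_mem hB
  · rw [image_flipAt_explode, image_image_flipAt]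
    exact explode_false_mem hB

lemma image_flipAt_singleton_eq_symmDiff {B : Finset (J n)} (hB : Admissible B)
    (hcard : B.card = n) (i : Fin n) : B.image (flipAt {i}) = B ∆ jpair (i, false) := by
  obtain ⟨d, hd, rfl⟩ := hB.exists_mem_fst_eq hcard i
  rw [image_flipAt_eq_symmDiff hd (hB.jstar_notMem hd),
    jpair_eq_of_fst_eq (x := d) (y := (d.1, false)) rfl]

lemma explode_true_symmDiff_mem (hadm : ∀ B ∈ 𝔅, Admissible B ∧ B.card = n)
    {B : Finset (J n)} (hB : B ∈ 𝔅) :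
    explode true (B ∆ jpair (i, false)) ∈ transposedExplodedSum i 𝔅 :=
  image_flipAt_singleton_eq_symmDiff (hadm B hB).1 (hadm B hB).2 i ▸
    explode_true_image_flipAt_mem hB

/-- Trading the pair `{i, i*}` of an exchange in `𝔅` for `{n+1, (n+1)*}` moves `A` into the
second half of the exploded sum and `C` into the first. -/
lemma exchangeAt_of_eq_jpair_last_union (hadm : ∀ B ∈ 𝔅, Admissible B ∧ B.card = n)
    {BA BC : Finset (J n)} {a b : J (n + 1)} {x : J n} {γ : Bool}
    (hb : b ∈ explode true (BC ∆ jpair (i, false)) \ explode false BA) (hba : b ≠ jstar a)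
    (hquad : ({a, b, jstar a, jstar b} : Finset (J (n + 1))) =
      jpair (Fin.last n, γ) ∪ (jpair x).image jlift)
    (hA : BA ∆ (jpair x ∆ jpair (i, false)) ∈ 𝔅) (hC : BC ∆ (jpair x ∆ jpair (i, false)) ∈ 𝔅) :
    ExchangeAt (transposedExplodedSum i 𝔅) (explode false BA)
      (explode true (BC ∆ jpair (i, false))) a := by
  refine ⟨b, hb, hba, ?_, ?_⟩ <;> rw [hquad, explode_symmDiff_jpair_last_union]
  · rw [← symmDiff_symmDiff_cancel_right (b := BA ∆ jpair x) (a := jpair (i, false)),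
      symmDiff_assoc BA]
    exact explode_true_symmDiff_mem hadm hA
  · rw [symmDiff_assoc, symmDiff_comm (jpair _)]
    exact explode_false_mem hC

lemma exchangeAt_jlift (hadm : ∀ B ∈ 𝔅, Admissible B ∧ B.card = n) (hSE : StrongExchange 𝔅)
    {BA BC : Finset (J n)} (hBA : BA ∈ 𝔅) (hBC : BC ∈ 𝔅) {a : J n}
    (ha : jlift a ∈ explode false BA ∆ explode true (BC ∆ jpair (i, false))) :
    ExchangeAt (transposedExplodedSum i 𝔅) (explode false BA)
      (explode true (BC ∆ jpair (i, false))) (jlift a) := by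
  have hquad : ({jlift a, (Fin.last n, true), jstar (jlift a), jstar (Fin.last n, true)} :
      Finset (J (n + 1))) = jpair (Fin.last n, true) ∪ (jpair a).image jlift := by
    rw [insert_jstar_eq_jpair_union, jpair_jlift, Finset.union_comm]
  by_cases hai : a.1 = i
  · have hP : jpair a = jpair (i, false) := jpair_eq_of_fst_eq hai
    refine exchangeAt_of_eq_jpair_last_union hadm (by simp) (by simp) hquad ?_ ?_ <;>
      rwa [hP, symmDiff_self, symmDiff_bot]
  have haP : a ∉ jpair (i, false) := fun h => hai (fst_eq_of_mem_jpair h)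
  obtain ⟨b, hb, hba, hA, hC⟩ :=
    hSE BA hBA BC hBC a (by simpa [Finset.mem_symmDiff, haP] using ha)
  by_cases hbi : b.1 = i
  · rw [insert_jstar_eq_jpair_union, jpair_eq_of_fst_eq (y := (i, false)) hbi,
      jpair_union_jpair_of_fst_ne hai] at hA hC
    exact exchangeAt_of_eq_jpair_last_union hadm (by simp) (by simp) hquad hA hC
  have hbP : b ∉ jpair (i, false) := fun h => hbi (fst_eq_of_mem_jpair h)
  refine ⟨jlift b, by simpa [Finset.mem_symmDiff, hbP] using hb, by simpa using hba, ?_, ?_⟩ <;>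
    rw [insert_jstar_jlift, explode_symmDiff_image_jlift]
  · exact explode_false_mem hA
  · rw [symmDiff_right_comm]
    exact explode_true_symmDiff_mem hadm hC

lemma exchangeAt_last (hadm : ∀ B ∈ 𝔅, Admissible B ∧ B.card = n) (hSE : StrongExchange 𝔅)
    {BA BC : Finset (J n)} (hBA : BA ∈ 𝔅) (hBC : BC ∈ 𝔅) (β : Bool) :
    ExchangeAt (transposedExplodedSum i 𝔅) (explode false BA)
      (explode true (BC ∆ jpair (i, false))) (Fin.last n, β) := by
  obtain ⟨d, hd, hdi⟩ := (hadm BA hBA).1.exists_mem_fst_eq (hadm BA hBA).2 i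
  have hdA : jstar d ∉ BA := (hadm BA hBA).1.jstar_notMem hd
  have hP : jpair (jstar d) = jpair (i, false) := jpair_eq_of_fst_eq hdi
  have hquad (x : J n) : ({(Fin.last n, β), jlift x, jstar (Fin.last n, β), jstar (jlift x)} :
      Finset (J (n + 1))) = jpair (Fin.last n, β) ∪ (jpair x).image jlift := by
    rw [insert_jstar_eq_jpair_union, jpair_jlift]
  by_cases hdC : d ∈ BC
  · have hdC' : jstar d ∉ BC := (hadm BC hBC).1.jstar_notMem hdC
    refine exchangeAt_of_eq_jpair_last_union hadm (b := jlift (jstar d)) ?_ (by simp) (hquad _)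
      ?_ ?_
    · simp [Finset.mem_symmDiff, hdA, hdC', ← hP]
    all_goals rwa [hP, symmDiff_self, symmDiff_bot]
  have hdC' : jstar d ∈ BC := by
    obtain ⟨e, he, hei⟩ := (hadm BC hBC).1.exists_mem_fst_eq (hadm BC hBC).2 i
    rcases eq_or_eq_jstar_of_fst_eq (hei.trans hdi.symm) with rfl | rfl
    exacts [absurd he hdC, he]
  obtain ⟨b, hb, hbd, hA, hC⟩ :=
    hSE BA hBA BC hBC (jstar d) (Finset.mem_symmDiff.2 (Or.inr ⟨hdC', hdA⟩))
  rw [jstar_jstar] at hbd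
  rw [insert_jstar_eq_jpair_union] at hA hC
  have hbi : b.1 ≠ i := by
    intro hbi
    rcases eq_or_eq_jstar_of_fst_eq (hbi.trans hdi.symm) with rfl | rfl
    · exact hbd rfl
    · rw [Finset.union_self, jpair_eq_of_fst_eq (jstar_fst d)] at hA
      exact hSE.symmDiff_jpair_notMem hBA hd hdA hA
  have hbP : b ∉ jpair (i, false) := fun h => hbi (fst_eq_of_mem_jpair h)
  rw [jpair_union_jpair_of_fst_ne (by simpa [hdi] using hbi.symm), hP,
    symmDiff_comm (jpair (i, false))] at hA hC
  refine exchangeAt_of_eq_jpair_last_union hadm (b := jlift b) ?_ (by simp) (hquad _) hA hC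
  simpa [Finset.mem_symmDiff, hbP] using hb

lemma exchangeAt_explode_false (hadm : ∀ B ∈ 𝔅, Admissible B ∧ B.card = n)
    (hSE : StrongExchange 𝔅) {BA : Finset (J n)} (hBA : BA ∈ 𝔅) {C : Finset (J (n + 1))}
    (hC : C ∈ transposedExplodedSum i 𝔅) {a : J (n + 1)} (ha : a ∈ explode false BA ∆ C) :
    ExchangeAt (transposedExplodedSum i 𝔅) (explode false BA) C a := by
  obtain ⟨BC, hBC, rfl | rfl⟩ := mem_transposedExplodedSum.1 hC
  · obtain ⟨x, hx, rfl⟩ := mem_explode_symmDiff_explode ha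
    exact ExchangeAt.explode (hSE BA hBA BC hBC x hx) fun B hB => explode_false_mem hB
  rw [image_flipAt_singleton_eq_symmDiff (hadm BC hBC).1 (hadm BC hBC).2] at ha ⊢
  rcases exists_eq_jlift_or_eq_last a with ⟨x, rfl⟩ | ⟨β, rfl⟩
  exacts [exchangeAt_jlift hadm hSE hBA hBC ha, exchangeAt_last hadm hSE hBA hBC β]

end TransposedExplodedSum

/-- if `𝔅₁` satisfies the Strong Exchange Property and
`𝔅₂ = (i, i*)·𝔅₁` (the transposition swapping `i` and `i*` applied elementwise), then the
exploded sum of `𝔅₁` and `𝔅₂` satisfies the Strong Exchange Property on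
`[n+1] ∪ [n+1]*`. -/
theorem transposed_exploded_sum_strong_exchange (n : ℕ) (𝔅₁ : Set (Finset (J n)))
    (hadm : ∀ B ∈ 𝔅₁, Admissible B ∧ B.card = n)
    (hSE : StrongExchange 𝔅₁) (i : Fin n)
    (𝔅₂ : Set (Finset (J n)))
    (h₂ : 𝔅₂ = {C | ∃ B ∈ 𝔅₁, C = B.image (Equiv.swap (i, false) (i, true))}) :
    StrongExchange (explodedSum 𝔅₁ 𝔅₂) := by
  rw [h₂, coe_swap_eq_flipAt]
  change StrongExchange (transposedExplodedSum i 𝔅₁)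
  intro A hA C hC a ha
  obtain ⟨BA, hBA, rfl | rfl⟩ := mem_transposedExplodedSum.1 hA
  · exact exchangeAt_explode_false hadm hSE hBA hC ha
  set τ := flipAt {i.castSucc, Fin.last n}
  have hτA : (explode true (BA.image (flipAt {i}))).image τ = explode false BA := by
    rw [image_flipAt_explode, image_image_flipAt, Bool.not_true]
  have hτa : τ a ∈ explode false BA ∆ C.image τ := by
    rw [← hτA, ← Finset.image_symmDiff _ _ (flipAt_involutive _).injective]
    exact Finset.mem_image_of_mem τ ha
  have h := (exchangeAt_explode_false hadm hSE hBA (image_flipAt_mem hC) hτa).image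
    (flipAt_involutive _) (flipAt_jstar _) fun _ => image_flipAt_mem
  rwa [← hτA, image_image_flipAt, image_image_flipAt, flipAt_involutive] at h
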